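/- arXiv:2002.04131 — 3 statements merged into one kernel-verified Lean document; each statement's English description precedes it below -/
import Mathlib

section
/- Let X, U be finite sets and r̃ : X × P(X) × U × P(U) → ℝ satisfy |r̃(x,μ,u,ν)| ≤ R̃ and |r̃(x,μ₁,u,ν₁) − r̃(x,μ₂,u,ν₂)| ≤ L_{r̃}(‖μ₁−μ₂‖₁ + ‖ν₁−ν₂‖₁) for all x,u,μᵢ,νᵢ. Define r(μ,h) = Σ_{x,u} r̃(x,μ,u,ν(μ,h)) μ(x) h(x)(u). Then |r(μ,h) − r(μ',h')| ≤ (R̃ + 2L_{r̃}) (‖μ−μ'‖₁ + max_x ‖h(x)−h'(x)‖₁). -/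
/-- A function is a probability mass function on a finite type. -/
def IsPmf {S : Type*} [Fintype S] (p : S → ℝ) : Prop :=
  (∀ s, 0 ≤ p s) ∧ ∑ s, p s = 1

/-- Auxiliary bound: Σ_x Σ_u |h(x,u)μ(x) − h'(x,u)μ'(x)| ≤ M + Σ_x |μ(x) − μ'(x)|. -/
lemma sum_abs_mul_sub_le {X U : Type*} [Fintype X] [Fintype U]
    (μ μ' : X → ℝ) (h h' : X → U → ℝ) (M : ℝ)
    (hμ0 : ∀ x, 0 ≤ μ x) (hμ1 : ∑ x, μ x = 1)
    (hh'0 : ∀ x u, 0 ≤ h' x u) (hh'1 : ∀ x, ∑ u, h' x u = 1)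
    (hM : ∀ x, ∑ u, |h x u - h' x u| ≤ M) :
    ∑ x, ∑ u, |h x u * μ x - h' x u * μ' x| ≤ M + ∑ x, |μ x - μ' x| := by
  have hx : ∀ x, ∑ u, |h x u * μ x - h' x u * μ' x| ≤ M * μ x + |μ x - μ' x| := by
    intro x
    have h1 : ∀ u, |h x u * μ x - h' x u * μ' x| ≤
        |h x u - h' x u| * μ x + h' x u * |μ x - μ' x| := by
      intro u
      have hid : h x u * μ x - h' x u * μ' x
          = (h x u - h' x u) * μ x + h' x u * (μ x - μ' x) := by ring
      rw [hid]
      refine (abs_add_le _ _).trans ?_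
      rw [abs_mul, abs_mul, abs_of_nonneg (hμ0 x), abs_of_nonneg (hh'0 x u)]
    calc ∑ u, |h x u * μ x - h' x u * μ' x|
        ≤ ∑ u, (|h x u - h' x u| * μ x + h' x u * |μ x - μ' x|) :=
          Finset.sum_le_sum fun u _ => h1 u
      _ = (∑ u, |h x u - h' x u|) * μ x + |μ x - μ' x| := by
          rw [Finset.sum_add_distrib, ← Finset.sum_mul, ← Finset.sum_mul, hh'1 x, one_mul]
      _ ≤ M * μ x + |μ x - μ' x| := by
          nlinarith [hM x, hμ0 x]
  calc ∑ x, ∑ u, |h x u * μ x - h' x u * μ' x| ≤ ∑ x, (M * μ x + |μ x - μ' x|) :=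
        Finset.sum_le_sum fun x _ => hx x
    _ = M + ∑ x, |μ x - μ' x| := by
        rw [Finset.sum_add_distrib, ← Finset.mul_sum, hμ1, mul_one]

/-- Continuity of the aggregated reward
    r(μ,h) = Σ_{x,u} r̃(x,μ,u,ν(μ,h)) μ(x) h(x)(u):
    |r(μ,h) − r(μ',h')| ≤ (R̃ + 2L_{r̃}) (‖μ−μ'‖₁ + max_x ‖h(x)−h'(x)‖₁). -/
theorem continuity_of_r {X U : Type*} [Fintype X] [Fintype U] [Nonempty X]
    (rt : X → (X → ℝ) → U → (U → ℝ) → ℝ) (Rt Lrt : ℝ)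
    (hbd : ∀ x u (ν₁ : U → ℝ) (μ₁ : X → ℝ), IsPmf μ₁ → IsPmf ν₁ → |rt x μ₁ u ν₁| ≤ Rt)
    (hlip : ∀ x u (μ₁ μ₂ : X → ℝ) (ν₁ ν₂ : U → ℝ), IsPmf μ₁ → IsPmf μ₂ → IsPmf ν₁ → IsPmf ν₂ →
      |rt x μ₁ u ν₁ - rt x μ₂ u ν₂| ≤ Lrt * ((∑ y, |μ₁ y - μ₂ y|) + ∑ v, |ν₁ v - ν₂ v|))
    (μ μ' : X → ℝ) (h h' : X → U → ℝ)
    (hμ : IsPmf μ) (hμ' : IsPmf μ') (hh : ∀ x, IsPmf (h x)) (hh' : ∀ x, IsPmf (h' x)) :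
    |(∑ x, ∑ u, rt x μ u (fun v => ∑ y, h y v * μ y) * (μ x * h x u)) -
      (∑ x, ∑ u, rt x μ' u (fun v => ∑ y, h' y v * μ' y) * (μ' x * h' x u))| ≤
      (Rt + 2 * Lrt) *
        ((∑ x, |μ x - μ' x|) +
          Finset.univ.sup' Finset.univ_nonempty (fun x => ∑ u, |h x u - h' x u|)) := by
  classical
  obtain ⟨x₀⟩ := ‹Nonempty X›
  have hUne : Nonempty U := by
    by_contra hc
    rw [not_nonempty_iff] at hc
    have h2 := (hh x₀).2
    rw [Finset.univ_eq_empty, Finset.sum_empty] at h2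
    exact one_ne_zero h2.symm
  obtain ⟨u₀⟩ := hUne
  set ν : U → ℝ := fun v => ∑ y, h y v * μ y with hνdef
  set ν' : U → ℝ := fun v => ∑ y, h' y v * μ' y with hν'def
  have hsum1 : ∀ (m : X → ℝ) (g : X → U → ℝ), IsPmf m → (∀ x, IsPmf (g x)) →
      (∑ v, ∑ y, g y v * m y) = 1 := by
    intro m g hm hg
    rw [Finset.sum_comm]
    have hc : ∀ y ∈ Finset.univ, (∑ v : U, g y v * m y) = m y := fun y _ => by
      rw [← Finset.sum_mul, (hg y).2, one_mul]
    rw [Finset.sum_congr rfl hc]; exact hm.2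
  have hν : IsPmf ν :=
    ⟨fun v => Finset.sum_nonneg fun y _ => mul_nonneg ((hh y).1 v) (hμ.1 y),
      hsum1 μ h hμ hh⟩
  have hν' : IsPmf ν' :=
    ⟨fun v => Finset.sum_nonneg fun y _ => mul_nonneg ((hh' y).1 v) (hμ'.1 y),
      hsum1 μ' h' hμ' hh'⟩
  set M : ℝ := Finset.univ.sup' Finset.univ_nonempty (fun x => ∑ u, |h x u - h' x u|)
    with hMdef
  have hMx : ∀ x, ∑ u, |h x u - h' x u| ≤ M :=
    fun x => Finset.le_sup' (fun x => ∑ u, |h x u - h' x u|) (Finset.mem_univ x)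
  have hM0 : 0 ≤ M :=
    le_trans (Finset.sum_nonneg fun u _ => abs_nonneg _) (hMx x₀)
  have hDμ0 : 0 ≤ ∑ x, |μ x - μ' x| := Finset.sum_nonneg fun x _ => abs_nonneg _
  have hRt0 : 0 ≤ Rt := (abs_nonneg _).trans (hbd x₀ u₀ ν μ hμ hν)
  by_cases hdeg : (∑ x, |μ x - μ' x|) + M = 0
  · -- degenerate case: μ = μ' and h = h'
    have hDμeq : (∑ x, |μ x - μ' x|) = 0 := by linarith
    have hMeq : M = 0 := by linarith
    have hμeq : μ' = μ := by
      funext x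
      have := (Finset.sum_eq_zero_iff_of_nonneg (fun x _ => abs_nonneg (μ x - μ' x))).mp
        hDμeq x (Finset.mem_univ x)
      have := abs_eq_zero.mp this
      linarith
    have hheq : h' = h := by
      funext x u
      have hsx : (∑ u, |h x u - h' x u|) = 0 :=
        le_antisymm (hMeq ▸ hMx x) (Finset.sum_nonneg fun u _ => abs_nonneg _)
      have := (Finset.sum_eq_zero_iff_of_nonneg
        (fun u _ => abs_nonneg (h x u - h' x u))).mp hsx u (Finset.mem_univ u)
      have := abs_eq_zero.mp this
      linarith
    subst hμeq; subst hheq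
    rw [sub_self, abs_zero, hdeg, mul_zero]
  · -- nondegenerate case
    have hpos : 0 < (∑ x, |μ x - μ' x|) + M :=
      lt_of_le_of_ne (by linarith) (Ne.symm hdeg)
    have hLrt0 : 0 ≤ Lrt := by
      rcases lt_or_ge 0 (∑ x, |μ x - μ' x|) with hp | hp
      · have h1 := hlip x₀ u₀ μ μ' ν ν hμ hμ' hν hν
        have h2 : (∑ v, |ν v - ν v|) = 0 := by simp
        rw [h2, add_zero] at h1
        nlinarith [abs_nonneg (rt x₀ μ u₀ ν - rt x₀ μ' u₀ ν)]
      · have hDμeq : (∑ x, |μ x - μ' x|) = 0 := le_antisymm hp hDμ0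
        have hMpos : 0 < M := by linarith
        obtain ⟨x₁, _, hx₁⟩ := Finset.exists_mem_eq_sup' (Finset.univ_nonempty (α := X))
          (fun x => ∑ u, |h x u - h' x u|)
        have h1 := hlip x₁ u₀ μ μ (h x₁) (h' x₁) hμ hμ (hh x₁) (hh' x₁)
        have h2 : (∑ y, |μ y - μ y|) = 0 := by simp
        rw [h2, zero_add] at h1
        have hMx₁ : M = ∑ u, |h x₁ u - h' x₁ u| := hMdef.trans hx₁
        rw [← hMx₁] at h1
        nlinarith [abs_nonneg (rt x₁ μ u₀ (h x₁) - rt x₁ μ u₀ (h' x₁))]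
    -- bound on ‖ν − ν'‖₁
    have hDν : (∑ v, |ν v - ν' v|) ≤ M + ∑ x, |μ x - μ' x| := by
      have h1 : ∀ v, |ν v - ν' v| ≤ ∑ y, |h y v * μ y - h' y v * μ' y| := by
        intro v
        have : ν v - ν' v = ∑ y, (h y v * μ y - h' y v * μ' y) := by
          rw [Finset.sum_sub_distrib]
        rw [this]
        exact Finset.abs_sum_le_sum_abs _ _
      calc (∑ v, |ν v - ν' v|) ≤ ∑ v, ∑ y, |h y v * μ y - h' y v * μ' y| :=
            Finset.sum_le_sum fun v _ => h1 v
        _ = ∑ y, ∑ v, |h y v * μ y - h' y v * μ' y| := Finset.sum_comm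
        _ ≤ M + ∑ x, |μ x - μ' x| := by
            refine sum_abs_mul_sub_le μ μ' (fun y v => h y v) (fun y v => h' y v) M
              hμ.1 hμ.2 (fun y v => (hh' y).1 v) (fun y => (hh' y).2) hMx
    -- pointwise bound on the Lipschitz difference of rt
    have hrtdiff : ∀ x u, |rt x μ u ν - rt x μ' u ν'| ≤
        Lrt * (2 * (∑ y, |μ y - μ' y|) + M) := by
      intro x u
      refine (hlip x u μ μ' ν ν' hμ hμ' hν hν').trans ?_
      have := hDν
      nlinarith
    -- pointwise bound on the terms
    have key : ∀ x u, |rt x μ u ν * (μ x * h x u) - rt x μ' u ν' * (μ' x * h' x u)| ≤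
        Lrt * (2 * (∑ y, |μ y - μ' y|) + M) * (μ x * h x u)
          + Rt * |h x u * μ x - h' x u * μ' x| := by
      intro x u
      have hid : rt x μ u ν * (μ x * h x u) - rt x μ' u ν' * (μ' x * h' x u)
          = (rt x μ u ν - rt x μ' u ν') * (μ x * h x u)
            + rt x μ' u ν' * (h x u * μ x - h' x u * μ' x) := by ring
      rw [hid]
      refine (abs_add_le _ _).trans (add_le_add ?_ ?_)
      · rw [abs_mul, abs_of_nonneg (mul_nonneg (hμ.1 x) ((hh x).1 u))]
        exact mul_le_mul_of_nonneg_right (hrtdiff x u)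
          (mul_nonneg (hμ.1 x) ((hh x).1 u))
      · rw [abs_mul]
        exact mul_le_mul_of_nonneg_right (hbd x u ν' μ' hμ' hν') (abs_nonneg _)
    -- total mass sums
    have hmass : (∑ x, ∑ u, μ x * h x u) = 1 := by
      have hc : ∀ x ∈ Finset.univ, (∑ u, μ x * h x u) = μ x := fun x _ => by
        rw [← Finset.mul_sum, (hh x).2, mul_one]
      rw [Finset.sum_congr rfl hc]; exact hμ.2
    have hsecond : (∑ x, ∑ u, |h x u * μ x - h' x u * μ' x|)
        ≤ M + ∑ x, |μ x - μ' x| :=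
      sum_abs_mul_sub_le μ μ' h h' M hμ.1 hμ.2 (fun x u => (hh' x).1 u)
        (fun x => (hh' x).2) hMx
    calc |(∑ x, ∑ u, rt x μ u ν * (μ x * h x u))
            - (∑ x, ∑ u, rt x μ' u ν' * (μ' x * h' x u))|
        = |∑ x, ∑ u, (rt x μ u ν * (μ x * h x u) - rt x μ' u ν' * (μ' x * h' x u))| := by
          rw [← Finset.sum_sub_distrib]
          congr 1
          refine Finset.sum_congr rfl fun x _ => ?_
          rw [Finset.sum_sub_distrib]
      _ ≤ ∑ x, ∑ u, |rt x μ u ν * (μ x * h x u) - rt x μ' u ν' * (μ' x * h' x u)| :=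
          (Finset.abs_sum_le_sum_abs _ _).trans
            (Finset.sum_le_sum fun x _ => Finset.abs_sum_le_sum_abs _ _)
      _ ≤ ∑ x, ∑ u, (Lrt * (2 * (∑ y, |μ y - μ' y|) + M) * (μ x * h x u)
            + Rt * |h x u * μ x - h' x u * μ' x|) :=
          Finset.sum_le_sum fun x _ => Finset.sum_le_sum fun u _ => key x u
      _ = Lrt * (2 * (∑ y, |μ y - μ' y|) + M) * (∑ x, ∑ u, μ x * h x u)
            + Rt * (∑ x, ∑ u, |h x u * μ x - h' x u * μ' x|) := by
          simp only [Finset.sum_add_distrib, Finset.mul_sum]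
      _ ≤ (Rt + 2 * Lrt) * ((∑ x, |μ x - μ' x|) + M) := by
          rw [hmass, mul_one]
          nlinarith [hsecond, mul_nonneg hLrt0 hM0,
            mul_nonneg hRt0 (le_of_lt hpos)]
end

section
/- Let X, U be finite sets and P : X × P(X) × U × P(U) → P(X) satisfy ‖P(x,μ₁,u,ν₁) − P(x,μ₂,u,ν₂)‖₁ ≤ L_P(‖μ₁−μ₂‖₁ + ‖ν₁−ν₂‖₁). Define Φ(μ,h)(x') = Σ_{x,u} P(x,μ,u,ν(μ,h))(x') μ(x) h(x)(u). Then ‖Φ(μ,h) − Φ(μ',h')‖₁ ≤ (2 L_P + 1)(‖μ−μ'‖₁ + max_x ‖h(x)−h'(x)‖₁). -/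
open Finset

section Pmf

variable {S T : Type*} [Fintype S] [Fintype T]

theorem IsPmf.nonempty {p : S → ℝ} (hp : IsPmf p) : Nonempty S := by
  by_contra hS
  have := hp.2
  simp [not_nonempty_iff.mp hS] at this

theorem IsPmf.mixture {μ : S → ℝ} {h : S → T → ℝ} (hμ : IsPmf μ) (hh : ∀ x, IsPmf (h x)) :
    IsPmf fun v => ∑ y, h y v * μ y := by
  refine ⟨fun v => sum_nonneg fun y _ => mul_nonneg ((hh y).1 v) (hμ.1 y), ?_⟩
  rw [sum_comm]
  simp only [← sum_mul, (hh _).2, one_mul, hμ.2]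

theorem IsPmf.joint {μ : S → ℝ} {h : S → T → ℝ} (hμ : IsPmf μ) (hh : ∀ x, IsPmf (h x)) :
    IsPmf fun p : S × T => μ p.1 * h p.1 p.2 := by
  refine ⟨fun p => mul_nonneg (hμ.1 p.1) ((hh p.1).1 p.2), ?_⟩
  simp only [Fintype.sum_prod_type, ← mul_sum, (hh _).2, mul_one, hμ.2]

theorem sum_abs_mul_sub_mul_le {a b : ℝ} {p q : S → ℝ} (ha : 0 ≤ a) (hq : IsPmf q) :
    ∑ s, |a * p s - b * q s| ≤ a * ∑ s, |p s - q s| + |a - b| := by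
  have hterm : ∀ s, |a * p s - b * q s| ≤ a * |p s - q s| + q s * |a - b| := fun s => by
    calc |a * p s - b * q s| = |a * (p s - q s) + q s * (a - b)| := by ring_nf
      _ ≤ |a * (p s - q s)| + |q s * (a - b)| := abs_add_le _ _
      _ = a * |p s - q s| + q s * |a - b| := by
        rw [abs_mul, abs_mul, abs_of_nonneg ha, abs_of_nonneg (hq.1 s)]
  calc ∑ s, |a * p s - b * q s| ≤ ∑ s, (a * |p s - q s| + q s * |a - b|) :=
        sum_le_sum fun s _ => hterm s
    _ = a * ∑ s, |p s - q s| + |a - b| := by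
        rw [sum_add_distrib, ← mul_sum, ← sum_mul, hq.2, one_mul]

theorem sum_abs_sum_sub_sum_le (f g : S → T → ℝ) :
    ∑ t, |∑ s, f s t - ∑ s, g s t| ≤ ∑ s, ∑ t, |f s t - g s t| := by
  rw [sum_comm]
  refine sum_le_sum fun t _ => ?_
  rw [← sum_sub_distrib]
  exact abs_sum_le_sum_abs _ _

theorem sum_abs_joint_sub_le {μ μ' : S → ℝ} {h h' : S → T → ℝ} {M : ℝ} (hμ : IsPmf μ)
    (hh' : ∀ x, IsPmf (h' x)) (hM : ∀ x, ∑ u, |h x u - h' x u| ≤ M) :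
    ∑ x, ∑ u, |μ x * h x u - μ' x * h' x u| ≤ ∑ x, |μ x - μ' x| + M := by
  calc ∑ x, ∑ u, |μ x * h x u - μ' x * h' x u|
      ≤ ∑ x, (μ x * M + |μ x - μ' x|) := sum_le_sum fun x _ =>
        (sum_abs_mul_sub_mul_le (hμ.1 x) (hh' x)).trans
          (by gcongr; exacts [hμ.1 x, hM x])
    _ = ∑ x, |μ x - μ' x| + M := by
        rw [sum_add_distrib, ← sum_mul, hμ.2, one_mul, add_comm]

theorem sum_abs_mixture_sub_le {ι : Type*} [Fintype ι] {K K' : ι → S → ℝ} {w w' : ι → ℝ}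
    {C : ℝ} (hw : IsPmf w) (hK' : ∀ i, IsPmf (K' i)) (hK : ∀ i, ∑ s, |K i s - K' i s| ≤ C) :
    ∑ s, |∑ i, K i s * w i - ∑ i, K' i s * w' i| ≤ C + ∑ i, |w i - w' i| := by
  calc ∑ s, |∑ i, K i s * w i - ∑ i, K' i s * w' i|
      ≤ ∑ i, ∑ s, |w i * K i s - w' i * K' i s| := by
        simpa only [mul_comm (K _ _), mul_comm (K' _ _)] using
          sum_abs_sum_sub_sum_le (fun i s => K i s * w i) (fun i s => K' i s * w' i)
    _ ≤ ∑ i, (w i * C + |w i - w' i|) := sum_le_sum fun i _ =>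
        (sum_abs_mul_sub_mul_le (hw.1 i) (hK' i)).trans (by gcongr; exacts [hw.1 i, hK i])
    _ = C + ∑ i, |w i - w' i| := by
        rw [sum_add_distrib, ← sum_mul, hw.2, one_mul]

end Pmf

/-- `L` is not assumed nonnegative; `0 ≤ L * (a + m)` is what a Lipschitz bound
`0 ≤ ‖·‖₁ ≤ L * (a + m)` provides. -/
theorem mul_add_le_two_mul_mul_add {L a d m : ℝ} (ha : 0 ≤ a) (hm : 0 ≤ m) (hd : 0 ≤ d)
    (hdm : d ≤ a + m) (hL : 0 ≤ L * (a + m)) : L * (a + d) ≤ 2 * L * (a + m) := by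
  rcases le_or_gt 0 L with hL0 | hL0
  · nlinarith
  · have : a + m ≤ 0 := nonpos_of_mul_nonneg_right hL hL0
    nlinarith

/-- Continuity of the aggregated mean-field transition
    Φ(μ,h)(x') = Σ_{x,u} P(x,μ,u,ν(μ,h))(x') μ(x) h(x)(u):
    ‖Φ(μ,h) − Φ(μ',h')‖₁ ≤ (2L_P + 1)(‖μ−μ'‖₁ + max_x ‖h(x)−h'(x)‖₁). -/
theorem continuity_of_Phi {X U : Type*} [Fintype X] [Fintype U] [Nonempty X]
    (P : X → (X → ℝ) → U → (U → ℝ) → X → ℝ) (LP : ℝ)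
    (hker : ∀ x u (μ₁ : X → ℝ) (ν₁ : U → ℝ), IsPmf μ₁ → IsPmf ν₁ → IsPmf (P x μ₁ u ν₁))
    (hlip : ∀ x u (μ₁ μ₂ : X → ℝ) (ν₁ ν₂ : U → ℝ), IsPmf μ₁ → IsPmf μ₂ → IsPmf ν₁ → IsPmf ν₂ →
      ∑ x', |P x μ₁ u ν₁ x' - P x μ₂ u ν₂ x'| ≤
        LP * ((∑ y, |μ₁ y - μ₂ y|) + ∑ v, |ν₁ v - ν₂ v|))
    (μ μ' : X → ℝ) (h h' : X → U → ℝ)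
    (hμ : IsPmf μ) (hμ' : IsPmf μ') (hh : ∀ x, IsPmf (h x)) (hh' : ∀ x, IsPmf (h' x)) :
    ∑ x', |(∑ x, ∑ u, P x μ u (fun v => ∑ y, h y v * μ y) x' * (μ x * h x u)) -
           (∑ x, ∑ u, P x μ' u (fun v => ∑ y, h' y v * μ' y) x' * (μ' x * h' x u))| ≤
      (2 * LP + 1) *
        ((∑ x, |μ x - μ' x|) +
          Finset.univ.sup' Finset.univ_nonempty (fun x => ∑ u, |h x u - h' x u|)) := by
  obtain ⟨x₀, -, hx₀⟩ := exists_mem_eq_sup' univ_nonempty fun x => ∑ u, |h x u - h' x u|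
  set A := ∑ x, |μ x - μ' x|
  set M := univ.sup' univ_nonempty fun x => ∑ u, |h x u - h' x u|
  have hM : ∀ x, ∑ u, |h x u - h' x u| ≤ M := fun x =>
    le_sup' (fun x => ∑ u, |h x u - h' x u|) (mem_univ x)
  have hw := sum_abs_joint_sub_le (μ' := μ') hμ hh' hM
  have hν : ∑ v, |∑ y, h y v * μ y - ∑ y, h' y v * μ' y| ≤ A + M :=
    (sum_abs_sum_sub_sum_le _ _).trans
      (by simpa only [mul_comm (h _ _), mul_comm (h' _ _)] using hw)
  have : Nonempty U := (hh x₀).nonempty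
  have hLP : 0 ≤ LP * (A + M) := hx₀ ▸ (sum_nonneg fun _ _ => abs_nonneg _).trans
    (hlip x₀ (Classical.arbitrary U) μ μ' _ _ hμ hμ' (hh x₀) (hh' x₀))
  have hK : ∀ x u, ∑ x', |P x μ u (fun v => ∑ y, h y v * μ y) x' -
      P x μ' u (fun v => ∑ y, h' y v * μ' y) x'| ≤ 2 * LP * (A + M) := fun x u =>
    (hlip x u μ μ' _ _ hμ hμ' (hμ.mixture hh) (hμ'.mixture hh')).trans
      (mul_add_le_two_mul_mul_add (sum_nonneg fun _ _ => abs_nonneg _)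
        ((sum_nonneg fun _ _ => abs_nonneg _).trans (hM x₀))
        (sum_nonneg fun _ _ => abs_nonneg _) hν hLP)
  have := sum_abs_mixture_sub_le (w' := fun p : X × U => μ' p.1 * h' p.1 p.2) (hμ.joint hh)
    (fun p => hker p.1 p.2 μ' _ hμ' (hμ'.mixture hh')) fun p => hK p.1 p.2
  simp only [Fintype.sum_prod_type] at this
  linarith
end

section
/- Let (C, d) be a metric space, Q : C → ℝ the optimal value function of the deterministic discounted control problem Q(c) = sup_{strategies} Σ_t γ^t r(c_t) with c_t+1 = (Φ(c_t), h_t), where r is L_r-Lipschitz and Φ is L_Φ-Lipschitz with γ L_Φ < 1. Then Q is Lipschitz continuous with constant L_r/(1 − γ L_Φ); in particular |Q(c) − Q(c')| ≤ L_r/(1−γL_Φ) · d(c,c'). -/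
noncomputable section

def traj {S H : Type*} (Φ : S → H → S) (μ0 : S) (hs : ℕ → H) : ℕ → S
  | 0 => μ0
  | n + 1 => Φ (traj Φ μ0 hs n) (hs n)

/-- Optimal Q-function on the lifted state-action space C = S × H, with the
    first action fixed to c.2. -/
def Qopt {S H : Type*} (Φ : S × H → S) (r : S × H → ℝ) (γ : ℝ) (c : S × H) : ℝ :=
  ⨆ hs : {hs : ℕ → H // hs 0 = c.2},
    ∑' t, γ ^ t * r (traj (fun s h => Φ (s, h)) c.1 hs t, (hs : ℕ → H) t)

/-!
Couple a strategy `h` from `c = (μ, h₀)` with the strategy from `c' = (μ', h₀')`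
that plays `h₀'` first and then copies `h`. The distance between the two trajectories
grows by at most a factor `L_Φ` per step, so the rewards at time `t` differ by at most
`L_r L_Φ^t d_C(c, c')`; summing the discounted differences gives `L_r / (1 - γ L_Φ) · d_C(c, c')`,
and taking the supremum over `h` bounds `Q(c) - Q(c')`.
-/

theorem abs_tsum_le_of_abs_le_geometric {u : ℕ → ℝ} {C q : ℝ} (hq0 : 0 ≤ q) (hq1 : q < 1)
    (hu : ∀ t, |u t| ≤ C * q ^ t) : |∑' t, u t| ≤ C * (1 - q)⁻¹ :=
  tsum_of_norm_bounded (f := u) ((hasSum_geometric_of_lt_one hq0 hq1).mul_left C) hu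

theorem summable_geometric_mul_of_abs_le {u : ℕ → ℝ} {γ R : ℝ} (hγ0 : 0 ≤ γ) (hγ1 : γ < 1)
    (hu : ∀ t, |u t| ≤ R) : Summable fun t => γ ^ t * u t :=
  Summable.of_norm_bounded ((summable_geometric_of_lt_one hγ0 hγ1).mul_left R) fun t => by
    rw [Real.norm_eq_abs, abs_mul, abs_of_nonneg (pow_nonneg hγ0 t), mul_comm]
    exact mul_le_mul_of_nonneg_right (hu t) (pow_nonneg hγ0 t)

section Control

variable {S H : Type*}

def sumDist [PseudoMetricSpace S] [PseudoMetricSpace H] (c c' : S × H) : ℝ :=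
  dist c.1 c'.1 + dist c.2 c'.2

theorem sumDist_comm [PseudoMetricSpace S] [PseudoMetricSpace H] (c c' : S × H) :
    sumDist c c' = sumDist c' c := by
  simp only [sumDist, dist_comm]

theorem sumDist_nonneg [PseudoMetricSpace S] [PseudoMetricSpace H] (c c' : S × H) :
    0 ≤ sumDist c c' :=
  add_nonneg dist_nonneg dist_nonneg

variable (Φ : S × H → S) (r : S × H → ℝ) (γ : ℝ)

def discountedReturn (s : S) (hs : ℕ → H) : ℝ :=
  ∑' t, γ ^ t * r (traj (fun s h => Φ (s, h)) s hs t, hs t)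

theorem Qopt_eq_iSup (c : S × H) :
    Qopt Φ r γ c = ⨆ hs : {hs : ℕ → H // hs 0 = c.2}, discountedReturn Φ r γ c.1 hs :=
  rfl

variable {Φ r γ}

theorem summable_discounted_rewards {R : ℝ} (hγ0 : 0 ≤ γ) (hγ1 : γ < 1) (hR : ∀ c, |r c| ≤ R)
    (s : S) (hs : ℕ → H) :
    Summable fun t => γ ^ t * r (traj (fun s h => Φ (s, h)) s hs t, hs t) :=
  summable_geometric_mul_of_abs_le hγ0 hγ1 fun _ => hR _

theorem abs_discountedReturn_le {R : ℝ} (hγ0 : 0 ≤ γ) (hγ1 : γ < 1) (hR : ∀ c, |r c| ≤ R)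
    (s : S) (hs : ℕ → H) : |discountedReturn Φ r γ s hs| ≤ R * (1 - γ)⁻¹ :=
  abs_tsum_le_of_abs_le_geometric hγ0 hγ1 fun t => by
    rw [abs_mul, abs_of_nonneg (pow_nonneg hγ0 t), mul_comm]
    exact mul_le_mul_of_nonneg_right (hR _) (pow_nonneg hγ0 t)

theorem bddAbove_discountedReturn {R : ℝ} (hγ0 : 0 ≤ γ) (hγ1 : γ < 1) (hR : ∀ c, |r c| ≤ R)
    (s : S) (P : (ℕ → H) → Prop) :
    BddAbove (Set.range fun hs : {hs : ℕ → H // P hs} => discountedReturn Φ r γ s hs) :=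
  ⟨R * (1 - γ)⁻¹, by
    rintro _ ⟨hs, rfl⟩
    exact (le_abs_self _).trans (abs_discountedReturn_le hγ0 hγ1 hR s hs)⟩

variable [PseudoMetricSpace S] [PseudoMetricSpace H]

theorem sumDist_traj_le {LΦ : ℝ} (hLΦ : 0 ≤ LΦ)
    (hΦ : ∀ c c', dist (Φ c) (Φ c') ≤ LΦ * sumDist c c')
    (s s' : S) {hs hs' : ℕ → H} (htail : ∀ t, hs (t + 1) = hs' (t + 1)) (t : ℕ) :
    sumDist (traj (fun s h => Φ (s, h)) s hs t, hs t) (traj (fun s h => Φ (s, h)) s' hs' t, hs' t)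
      ≤ LΦ ^ t * sumDist (s, hs 0) (s', hs' 0) := by
  induction t with
  | zero => simp [traj]
  | succ n ih =>
    calc _ = dist (Φ (traj _ s hs n, hs n)) (Φ (traj _ s' hs' n, hs' n)) := by
          simp only [sumDist, traj, htail n, dist_self, add_zero]
      _ ≤ LΦ * (LΦ ^ n * sumDist (s, hs 0) (s', hs' 0)) :=
          (hΦ _ _).trans (mul_le_mul_of_nonneg_left ih hLΦ)
      _ = LΦ ^ (n + 1) * sumDist (s, hs 0) (s', hs' 0) := by ring

theorem abs_discountedReturn_sub_le {R Lr LΦ : ℝ} (hγ0 : 0 ≤ γ) (hγ1 : γ < 1)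
    (hLr : 0 ≤ Lr) (hLΦ : 0 ≤ LΦ) (hγLΦ : γ * LΦ < 1) (hR : ∀ c, |r c| ≤ R)
    (hr : ∀ c c', |r c - r c'| ≤ Lr * sumDist c c')
    (hΦ : ∀ c c', dist (Φ c) (Φ c') ≤ LΦ * sumDist c c')
    (s s' : S) {hs hs' : ℕ → H} (htail : ∀ t, hs (t + 1) = hs' (t + 1)) :
    |discountedReturn Φ r γ s hs - discountedReturn Φ r γ s' hs'| ≤
      Lr * sumDist (s, hs 0) (s', hs' 0) * (1 - γ * LΦ)⁻¹ := by
  rw [discountedReturn, discountedReturn, ← Summable.tsum_sub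
    (summable_discounted_rewards hγ0 hγ1 hR s hs) (summable_discounted_rewards hγ0 hγ1 hR s' hs')]
  refine abs_tsum_le_of_abs_le_geometric (mul_nonneg hγ0 hLΦ) hγLΦ fun t => ?_
  rw [← mul_sub, abs_mul, abs_of_nonneg (pow_nonneg hγ0 t)]
  calc γ ^ t * |_ - _| ≤ γ ^ t * (Lr * (LΦ ^ t * sumDist (s, hs 0) (s', hs' 0))) :=
        mul_le_mul_of_nonneg_left ((hr _ _).trans (mul_le_mul_of_nonneg_left
          (sumDist_traj_le hLΦ hΦ s s' htail t) hLr)) (pow_nonneg hγ0 t)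
    _ = Lr * sumDist (s, hs 0) (s', hs' 0) * (γ * LΦ) ^ t := by ring

theorem Qopt_le_add {R Lr LΦ : ℝ} (hγ0 : 0 ≤ γ) (hγ1 : γ < 1)
    (hLr : 0 ≤ Lr) (hLΦ : 0 ≤ LΦ) (hγLΦ : γ * LΦ < 1) (hR : ∀ c, |r c| ≤ R)
    (hr : ∀ c c', |r c - r c'| ≤ Lr * sumDist c c')
    (hΦ : ∀ c c', dist (Φ c) (Φ c') ≤ LΦ * sumDist c c') (c c' : S × H) :
    Qopt Φ r γ c ≤ Qopt Φ r γ c' + Lr / (1 - γ * LΦ) * sumDist c c' := by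
  have : Nonempty {hs : ℕ → H // hs 0 = c.2} := ⟨⟨fun _ => c.2, rfl⟩⟩
  rw [Qopt_eq_iSup]
  refine ciSup_le fun ⟨hs, hs0⟩ => ?_
  set hs' := Function.update hs 0 c'.2
  have hs'0 : hs' 0 = c'.2 := Function.update_self ..
  have htail (t : ℕ) : hs (t + 1) = hs' (t + 1) :=
    (Function.update_of_ne t.succ_ne_zero ..).symm
  have hcoupled := abs_discountedReturn_sub_le hγ0 hγ1 hLr hLΦ hγLΦ hR hr hΦ c.1 c'.1 htail
  have hsup : discountedReturn Φ r γ c'.1 hs' ≤ Qopt Φ r γ c' :=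
    le_ciSup (bddAbove_discountedReturn hγ0 hγ1 hR c'.1 _) ⟨hs', hs'0⟩
  rw [hs0, hs'0] at hcoupled
  have hdiv : Lr * sumDist c c' * (1 - γ * LΦ)⁻¹ = Lr / (1 - γ * LΦ) * sumDist c c' := by ring
  linarith [le_of_abs_le hcoupled]

theorem abs_Qopt_sub_le {R Lr LΦ : ℝ} (hγ0 : 0 ≤ γ) (hγ1 : γ < 1)
    (hLr : 0 ≤ Lr) (hLΦ : 0 ≤ LΦ) (hγLΦ : γ * LΦ < 1) (hR : ∀ c, |r c| ≤ R)
    (hr : ∀ c c', |r c - r c'| ≤ Lr * sumDist c c')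
    (hΦ : ∀ c c', dist (Φ c) (Φ c') ≤ LΦ * sumDist c c') (c c' : S × H) :
    |Qopt Φ r γ c - Qopt Φ r γ c'| ≤ Lr / (1 - γ * LΦ) * sumDist c c' := by
  have h := Qopt_le_add hγ0 hγ1 hLr hLΦ hγLΦ hR hr hΦ c c'
  have h' := Qopt_le_add hγ0 hγ1 hLr hLΦ hγLΦ hR hr hΦ c' c
  rw [sumDist_comm] at h'
  exact abs_sub_le_iff.2 ⟨by linarith, by linarith⟩

theorem nonneg_of_dist_le_mul_sumDist {α : Type*} [PseudoMetricSpace α] {f : S × H → α}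
    {L : ℝ} (hf : ∀ c c', dist (f c) (f c') ≤ L * sumDist c c') {c c' : S × H}
    (hpos : 0 < sumDist c c') : 0 ≤ L :=
  nonneg_of_mul_nonneg_left (dist_nonneg.trans (hf c c')) hpos

end Control

/-- Lipschitz continuity of the optimal Q-function: if r is L_r-Lipschitz
    and Φ is L_Φ-Lipschitz for the metric d_C(c,c') = dist(c.1,c'.1) + dist(c.2,c'.2),
    and γ L_Φ < 1, then |Q(c) − Q(c')| ≤ L_r/(1 − γ L_Φ) · d_C(c,c'). -/
theorem Q_lipschitz {S H : Type*} [PseudoMetricSpace S] [PseudoMetricSpace H]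
    (Φ : S × H → S) (r : S × H → ℝ) (γ Lr LΦ R : ℝ)
    (hγ0 : 0 < γ) (hγ1 : γ < 1) (hγLΦ : γ * LΦ < 1)
    (hRbd : ∀ c, |r c| ≤ R)
    (hr : ∀ c c', |r c - r c'| ≤ Lr * (dist c.1 c'.1 + dist c.2 c'.2))
    (hΦ : ∀ c c', dist (Φ c) (Φ c') ≤ LΦ * (dist c.1 c'.1 + dist c.2 c'.2)) :
    ∀ c c' : S × H,
      |Qopt Φ r γ c - Qopt Φ r γ c'| ≤
        Lr / (1 - γ * LΦ) * (dist c.1 c'.1 + dist c.2 c'.2) := by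
  intro c c'
  by_cases hdeg : ∀ a b : S × H, sumDist a b = 0
  · -- on a space of diameter zero the hypotheses also hold with both constants equal to zero
    have hr₀ : ∀ a b, |r a - r b| ≤ 0 * sumDist a b := fun a b => by
      have h : |r a - r b| ≤ Lr * sumDist a b := hr a b
      rwa [hdeg a b, mul_zero] at h ⊢
    have hΦ₀ : ∀ a b, dist (Φ a) (Φ b) ≤ 0 * sumDist a b := fun a b => by
      have h : dist (Φ a) (Φ b) ≤ LΦ * sumDist a b := hΦ a b
      rwa [hdeg a b, mul_zero] at h ⊢
    have h := abs_Qopt_sub_le hγ0.le hγ1 le_rfl le_rfl (by simp) hRbd hr₀ hΦ₀ c c'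
    change _ ≤ _ * sumDist c c'
    rwa [hdeg c c', mul_zero] at h ⊢
  · push Not at hdeg
    obtain ⟨a, b, hab⟩ := hdeg
    have hpos := (sumDist_nonneg a b).lt_of_ne' hab
    have hLr : 0 ≤ Lr := nonneg_of_dist_le_mul_sumDist (f := r) hr hpos
    have hLΦ : 0 ≤ LΦ := nonneg_of_dist_le_mul_sumDist hΦ hpos
    exact abs_Qopt_sub_le hγ0.le hγ1 hLr hLΦ hγLΦ hRbd hr hΦ c c'

end
end
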